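/- Let M be a topological space, f : M → M a homeomorphism, and n ≥ 1 an integer. Consider the quotient space (M × ℝ)/(nℤ) of M × ℝ by the action of the subgroup nℤ ⊆ ℤ (acting by m • (x, s) = (fᵐ(x), s − m) for m ∈ nℤ). Then the natural map (M × ℝ)/(nℤ) → M_f induced by the identity of M × ℝ is a covering map, and each of its fibers has exactly n elements (an n-fold covering). -/

import Mathlib

/-- The orbit relation on `M × ℝ` of the ℤ-action `n • (x, s) = (fⁿ x, s - n)`.
The mapping torus `M_f` is the quotient `Quot (mtRel f)`. -/
def mtRel {M : Type*} [TopologicalSpace M] (f : M ≃ₜ M) (p q : M × ℝ) : Prop :=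
  ∃ n : ℤ, ((f.toEquiv ^ n) p.1, p.2 - (n : ℝ)) = q

/-- The orbit relation on `M × ℝ` of the action of the subgroup `nℤ ⊆ ℤ`,
`m • (x, s) = (fᵐ x, s - m)` for `m ∈ nℤ`. -/
def mtRelN {M : Type*} [TopologicalSpace M] (f : M ≃ₜ M) (n : ℕ) (p q : M × ℝ) : Prop :=
  ∃ m : ℤ, ((f.toEquiv ^ ((n : ℤ) * m)) p.1, p.2 - (((n : ℤ) * m : ℤ) : ℝ)) = q

/-!
The shifts `(x, s) ↦ (fᵐ x, s - m)` move the real coordinate by the integer `m`, so a slab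
`M × (t - 1/2, t + 1/2)` meets none of its nontrivial translates. Hence the residual action
of `ℤ/nℤ` on `(M × ℝ)/nℤ` is free and properly discontinuous, and the natural map to `M_f`
is the quotient by it: a covering map whose fibres are `ℤ/nℤ`-torsors.
-/

open Set

namespace MappingTorus

variable {M : Type*} [TopologicalSpace M] (f : M ≃ₜ M)

theorem _root_.Homeomorph.toEquiv_zpow (g : M ≃ₜ M) (m : ℤ) :
    (g ^ m).toEquiv = g.toEquiv ^ m :=
  map_zpow (MonoidHom.mk' (fun h : M ≃ₜ M ↦ h.toEquiv) fun _ _ ↦ rfl) g m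

def shift (m : ℤ) : M × ℝ ≃ₜ M × ℝ :=
  (f ^ m).prodCongr (Homeomorph.subRight (m : ℝ))

theorem shift_apply (m : ℤ) (p : M × ℝ) :
    shift f m p = ((f.toEquiv ^ m) p.1, p.2 - m) := by
  rw [← Homeomorph.toEquiv_zpow]; rfl

@[simp]
theorem shift_zero (p : M × ℝ) : shift f 0 p = p := by
  simp [shift_apply]

theorem shift_add (a b : ℤ) (p : M × ℝ) : shift f (a + b) p = shift f a (shift f b p) := by
  simp only [shift_apply, zpow_add, Equiv.Perm.mul_apply, Int.cast_add, Prod.mk.injEq, true_and]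
  ring

theorem eq_zero_of_shift_eq {m : ℤ} {a b : M × ℝ} (h : shift f m a = b)
    (hab : |a.2 - b.2| < 1) : m = 0 := by
  rw [← h, shift_apply, sub_sub_cancel] at hab
  exact_mod_cast Int.abs_lt_one_iff.mp (by exact_mod_cast hab)

theorem mtRelN_iff (n : ℕ) (p q : M × ℝ) :
    mtRelN f n p q ↔ ∃ m : ℤ, (m : ZMod n) = 0 ∧ shift f m p = q := by
  simp only [mtRelN, shift_apply, ZMod.intCast_zmod_eq_zero_iff_dvd]
  constructor
  · rintro ⟨m, h⟩
    exact ⟨n * m, dvd_mul_right _ _, h⟩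
  · rintro ⟨_, ⟨m, rfl⟩, h⟩
    exact ⟨m, h⟩

theorem mtRel_eq_mtRelN_one : mtRel f = mtRelN f 1 := by
  ext p q
  simp [mtRelN_iff, mtRel, shift_apply, Subsingleton.elim _ (0 : ZMod 1)]

theorem equivalence_mtRelN (n : ℕ) : Equivalence (mtRelN f n) := by
  refine ⟨fun p ↦ (mtRelN_iff f n p p).mpr ⟨0, by simp⟩, fun {p q} h ↦ ?_,
    fun {p q r} h h' ↦ ?_⟩
  · obtain ⟨m, hm, rfl⟩ := (mtRelN_iff f n p q).mp h
    exact (mtRelN_iff f n _ _).mpr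
      ⟨-m, by simp [hm], by rw [← shift_add, neg_add_cancel, shift_zero]⟩
  · obtain ⟨m, hm, rfl⟩ := (mtRelN_iff f n p q).mp h
    obtain ⟨m', hm', rfl⟩ := (mtRelN_iff f n _ r).mp h'
    exact (mtRelN_iff f n _ _).mpr ⟨m' + m, by simp [hm, hm'], shift_add f _ _ _⟩

theorem mk_mtRelN_eq_iff {n : ℕ} {p q : M × ℝ} :
    Quot.mk (mtRelN f n) p = Quot.mk _ q ↔ ∃ m : ℤ, (m : ZMod n) = 0 ∧ shift f m p = q :=
  ((equivalence_mtRelN f n).quot_mk_eq_iff p q).trans (mtRelN_iff f n p q)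

theorem mk_mtRel_eq_iff {p q : M × ℝ} :
    Quot.mk (mtRel f) p = Quot.mk _ q ↔ ∃ m : ℤ, shift f m p = q := by
  rw [mtRel_eq_mtRelN_one, mk_mtRelN_eq_iff]
  simp [Subsingleton.elim _ (0 : ZMod 1)]

theorem mk_mtRel_shift (m : ℤ) (p : M × ℝ) :
    Quot.mk (mtRel f) (shift f m p) = Quot.mk _ p :=
  (mk_mtRel_eq_iff f).mpr ⟨-m, by rw [← shift_add, neg_add_cancel, shift_zero]⟩

variable (n : ℕ)

theorem mk_mtRelN_shift_eq_of_intCast_eq {a b : ℤ} (h : (a : ZMod n) = b) (p : M × ℝ) :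
    Quot.mk (mtRelN f n) (shift f a p) = Quot.mk _ (shift f b p) :=
  (mk_mtRelN_eq_iff f).mpr ⟨b - a, by simp [h], by rw [← shift_add, sub_add_cancel]⟩

theorem isOpenMap_mk_mtRelN : IsOpenMap (Quot.mk (mtRelN f n)) := by
  intro V hV
  rw [← isQuotientMap_quot_mk.isOpen_preimage, isOpen_iff_forall_mem_open]
  rintro q ⟨p, hp, hpq⟩
  obtain ⟨m, hm, rfl⟩ := (mk_mtRelN_eq_iff f).mp hpq
  refine ⟨shift f m '' V, ?_, (shift f m).isOpenMap V hV, ⟨p, hp, rfl⟩⟩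
  rintro _ ⟨p', hp', rfl⟩
  exact ⟨p', hp', (mk_mtRelN_eq_iff f).mpr ⟨m, hm, rfl⟩⟩

instance : AddAction (ZMod n) (Quot (mtRelN f n)) where
  vadd k := Quot.map (shift f (k.cast : ℤ)) fun p q h ↦ by
    obtain ⟨m, hm, rfl⟩ := (mtRelN_iff f n p q).mp h
    refine (mtRelN_iff f n _ _).mpr ⟨m, hm, ?_⟩
    rw [← shift_add, ← shift_add, add_comm]
  zero_vadd := Quot.ind fun p ↦ by
    change Quot.mk _ (shift f (ZMod.cast 0) p) = _
    rw [ZMod.cast_zero, shift_zero]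
  add_vadd k l := Quot.ind fun p ↦ by
    change Quot.mk _ (shift f (k + l).cast p) = Quot.mk _ (shift f k.cast (shift f l.cast p))
    rw [← shift_add]
    exact mk_mtRelN_shift_eq_of_intCast_eq f n (by push_cast [ZMod.intCast_zmod_cast]; rfl) p

theorem vadd_mk (k : ZMod n) (p : M × ℝ) :
    k +ᵥ Quot.mk (mtRelN f n) p = Quot.mk _ (shift f k.cast p) :=
  rfl

theorem intCast_vadd_mk (m : ℤ) (p : M × ℝ) :
    (m : ZMod n) +ᵥ Quot.mk (mtRelN f n) p = Quot.mk _ (shift f m p) :=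
  mk_mtRelN_shift_eq_of_intCast_eq f n (ZMod.intCast_zmod_cast _) p

instance : ContinuousConstVAdd (ZMod n) (Quot (mtRelN f n)) where
  continuous_const_vadd k := continuous_quot_map _ (shift f k.cast).continuous

def coverMap : Quot (mtRelN f n) → Quot (mtRel f) :=
  Quot.lift (Quot.mk (mtRel f)) fun p q h ↦ by
    obtain ⟨m, -, rfl⟩ := (mtRelN_iff f n p q).mp h
    exact (mk_mtRel_shift f m p).symm

theorem coverMap_mk (p : M × ℝ) : coverMap f n (Quot.mk _ p) = Quot.mk _ p :=
  rfl

theorem coverMap_vadd (k : ZMod n) (y : Quot (mtRelN f n)) :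
    coverMap f n (k +ᵥ y) = coverMap f n y := by
  induction y using Quot.ind with | _ p => exact mk_mtRel_shift f _ p

theorem isAddQuotientCoveringMap_coverMap : IsAddQuotientCoveringMap (coverMap f n) (ZMod n) where
  toIsQuotientMap :=
    isQuotientMap_quot_mk.of_comp_isQuotientMap (g := coverMap f n) isQuotientMap_quot_mk
  apply_eq_iff_mem_orbit {y y'} := by
    induction y using Quot.ind with | _ p
    induction y' using Quot.ind with | _ q
    constructor
    · intro h
      obtain ⟨m, rfl⟩ := (mk_mtRel_eq_iff f).mp h.symm
      exact ⟨m, intCast_vadd_mk f n m q⟩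
    · rintro ⟨k, hk⟩
      rw [← hk, coverMap_vadd]
  disjoint y := by
    induction y using Quot.ind with | _ p
    refine ⟨Quot.mk _ '' (Prod.snd ⁻¹' Ioo (p.2 - 2⁻¹) (p.2 + 2⁻¹)), ?_, ?_⟩
    · exact (isOpenMap_mk_mtRelN f n _ (isOpen_Ioo.preimage continuous_snd)).mem_nhds
        ⟨p, by simp, rfl⟩
    rintro k ⟨_, ⟨_, ⟨a, ha, rfl⟩, rfl⟩, b, hb, hab⟩
    dsimp only at hab
    rw [vadd_mk, mk_mtRelN_eq_iff] at hab
    obtain ⟨m, hm, hab⟩ := hab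
    have hba : shift f (-m + k.cast) a = b := by
      rw [shift_add, ← hab, ← shift_add, neg_add_cancel, shift_zero]
    have hzero := eq_zero_of_shift_eq f hba (by
      simp only [mem_preimage, mem_Ioo] at ha hb
      rw [abs_lt]; constructor <;> linarith)
    rw [← ZMod.intCast_zmod_cast k, ← neg_add_eq_zero.mp hzero, hm]

end MappingTorus

theorem intermediate_quotient_is_n_fold_covering_general
    (M : Type*) [TopologicalSpace M] (f : M ≃ₜ M) (n : ℕ) :
    ∃ F : Quot (mtRelN f n) → Quot (mtRel f),
      (∀ p : M × ℝ, F (Quot.mk (mtRelN f n) p) = Quot.mk (mtRel f) p) ∧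
      IsCoveringMap F ∧
      ∀ z : Quot (mtRel f), Nat.card (F ⁻¹' {z}) = n := by
  have hF := MappingTorus.isAddQuotientCoveringMap_coverMap f n
  refine ⟨_, MappingTorus.coverMap_mk f n, hF.isCoveringMap, fun z ↦ ?_⟩
  obtain ⟨y, rfl⟩ := hF.surjective z
  rw [Nat.card_congr (hF.fiberEquivAddGroup ⟨y, rfl⟩), Nat.card_zmod]

/-- For `n ≥ 1`, the natural map `(M × ℝ)/(nℤ) → M_f` induced by the
identity of `M × ℝ` is a covering map and each of its fibers has exactly `n` elements. -/
theorem intermediate_quotient_is_n_fold_covering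
    (M : Type*) [TopologicalSpace M] (f : M ≃ₜ M) (n : ℕ) (hn : 1 ≤ n) :
    ∃ F : Quot (mtRelN f n) → Quot (mtRel f),
      (∀ p : M × ℝ, F (Quot.mk (mtRelN f n) p) = Quot.mk (mtRel f) p) ∧
      IsCoveringMap F ∧
      ∀ z : Quot (mtRel f), Nat.card (F ⁻¹' {z}) = n :=
  intermediate_quotient_is_n_fold_covering_general M f n
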